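/- arXiv:2508.01452 — 7 statements merged into one kernel-verified Lean document; each statement's English description precedes it below -/
import Mathlib

section
/- Let μ be a finite complex (or signed) Borel measure on [0,1] and define the Hausdorff operator (H_μ f)(x) = ∫_{[0,1]} f(ux) dμ(u) for bounded measurable f : (0,∞) → ℂ. Then H_μ is regular — i.e., for every bounded measurable f with f(x) → l as x → ∞ one has (H_μ f)(x) → l as x → ∞ — if and only if μ([0,1]) = 1 and μ({0}) = 0. -/
open MeasureTheory Filter Topology

/-- Rogosinski's regularity theorem for the Hausdorff operator
`(H_μ f)(x) = ∫_{[0,1]} f (u x) dμ(u)`, where the finite complex Borel measure `μ` on `[0,1]`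
is represented as `w dν` with `ν` a finite positive Borel measure carried by `[0,1]` and
`w ∈ L¹(ν)` a complex density.  The operator is regular (every bounded measurable
`f : (0,∞) → ℂ` with `f x → l` as `x → ∞` satisfies `(H_μ f)(x) → l`) if and only if
`μ([0,1]) = 1` and `μ({0}) = 0`. -/
theorem stmt_0 (ν : Measure ℝ) [IsFiniteMeasure ν]
    (hcarrier : ν (Set.Icc (0:ℝ) 1)ᶜ = 0)
    (w : ℝ → ℂ) (hw : Integrable w ν) :
    (∀ f : ℝ → ℂ, Measurable f → (∃ C, ∀ x, ‖f x‖ ≤ C) → ∀ l : ℂ,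
        Tendsto f atTop (𝓝 l) →
        Tendsto (fun x : ℝ => ∫ u, w u * f (u * x) ∂ν) atTop (𝓝 l)) ↔
      ((∫ u, w u ∂ν) = 1 ∧ (∫ u in ({0} : Set ℝ), w u ∂ν) = 0) := by
  constructor
  · intro H
    constructor
    · have h1 := H (fun _ => 1) measurable_const ⟨1, fun x => by simp⟩ 1 tendsto_const_nhds
      have h2 : Tendsto (fun _ : ℝ => ∫ u, w u * 1 ∂ν) atTop (𝓝 (∫ u, w u ∂ν)) := by
        simpa using (tendsto_const_nhds : Tendsto (fun _ : ℝ => ∫ u, w u ∂ν) atTop _)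
      simpa using tendsto_nhds_unique h2 h1
    · set f : ℝ → ℂ := Set.indicator ({0} : Set ℝ) (fun _ => 1) with hfdef
      have hfm : Measurable f := measurable_const.indicator (measurableSet_singleton 0)
      have hfb : ∃ C, ∀ x, ‖f x‖ ≤ C := by
        refine ⟨1, fun x => ?_⟩
        by_cases hx : x ∈ ({0} : Set ℝ) <;> simp [hfdef, hx, Pi.single_apply] <;> split_ifs <;> simp
      have hfl : Tendsto f atTop (𝓝 0) := by
        have : ∀ᶠ x in atTop, f x = 0 := by
          filter_upwards [eventually_ge_atTop (1 : ℝ)] with x hx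
          have : x ∉ ({0} : Set ℝ) := by simp; linarith
          simp [hfdef, Set.indicator_of_notMem this, Pi.single_apply, this]; simpa using this
        exact Tendsto.congr' (this.mono fun x hx => hx.symm) tendsto_const_nhds
      have h1 := H f hfm hfb 0 hfl
      have h2 : Tendsto (fun _ : ℝ => ∫ u in ({0} : Set ℝ), w u ∂ν) atTop
          (𝓝 (∫ u in ({0} : Set ℝ), w u ∂ν)) := tendsto_const_nhds
      have heq : ∀ᶠ x : ℝ in atTop,
          (∫ u, w u * f (u * x) ∂ν) = ∫ u in ({0} : Set ℝ), w u ∂ν := by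
        filter_upwards [eventually_ge_atTop (1 : ℝ)] with x hx
        rw [← integral_indicator (measurableSet_singleton 0)]
        congr 1
        funext u
        by_cases hu : u = 0
        · simp [hfdef, hu]
        · have hux : u * x ≠ 0 := mul_ne_zero hu (by linarith)
          simp [hfdef, Set.indicator_of_notMem, hux, hu, Pi.single_apply]
      exact tendsto_nhds_unique h2 (Tendsto.congr' heq h1)
  · rintro ⟨hsum, hzero⟩ f hf ⟨C, hC⟩ l hl
    -- from hzero: ν {0} = 0 or w 0 = 0
    have hsing : (ν {(0:ℝ)}).toReal • w 0 = 0 := by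
      rw [show (ν {(0:ℝ)}).toReal = ν.real {0} from rfl, ← integral_singleton w (0:ℝ)]; exact hzero
    have hkey : ∀ᵐ u ∂ν, Tendsto (fun x : ℝ => w u * (f (u * x) - l)) atTop (𝓝 0) := by
      have h01 : ∀ᵐ u ∂ν, u ∈ Set.Icc (0:ℝ) 1 := by
        rw [ae_iff]; exact hcarrier
      have hpos : ∀ u : ℝ, 0 < u →
          Tendsto (fun x : ℝ => w u * (f (u * x) - l)) atTop (𝓝 0) := by
        intro u hu
        have h1 : Tendsto (fun x : ℝ => u * x) atTop atTop :=
          Tendsto.const_mul_atTop hu tendsto_id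
        have h2 : Tendsto (fun x : ℝ => f (u * x) - l) atTop (𝓝 (l - l)) :=
          (hl.comp h1).sub tendsto_const_nhds
        have h3 := h2.const_mul (w u)
        simpa using h3
      rcases smul_eq_zero.mp hsing with h0 | h0
      · have hν0 : ν {(0:ℝ)} = 0 := by
          have := (ENNReal.toReal_eq_zero_iff _).mp h0
          rcases this with h | h
          · exact h
          · exact absurd h (measure_ne_top ν _)
        have hne : ∀ᵐ u ∂ν, u ≠ (0:ℝ) := by
          rw [ae_iff]; convert hν0 using 2; ext u; simp
        filter_upwards [h01, hne] with u hu hune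
        exact hpos u (lt_of_le_of_ne hu.1 (Ne.symm hune))
      · filter_upwards [h01] with u hu
        rcases eq_or_lt_of_le hu.1 with h | h
        · simp [← h, h0]
        · exact hpos u h
    have hmeas : ∀ x : ℝ, AEStronglyMeasurable (fun u => w u * (f (u * x) - l)) ν :=
      fun x => hw.aestronglyMeasurable.mul
        (((hf.comp (measurable_id.mul_const x)).sub measurable_const).aestronglyMeasurable)
    have hdct : Tendsto (fun x : ℝ => ∫ u, w u * (f (u * x) - l) ∂ν) atTop
        (𝓝 (∫ _ : ℝ, (0:ℂ) ∂ν)) := by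
      refine tendsto_integral_filter_of_dominated_convergence
        (fun u => ‖w u‖ * (C + ‖l‖)) ?_ ?_ ?_ hkey
      · exact Eventually.of_forall hmeas
      · refine Eventually.of_forall fun x => Eventually.of_forall fun u => ?_
        rw [norm_mul]
        refine mul_le_mul_of_nonneg_left ?_ (norm_nonneg _)
        calc ‖f (u * x) - l‖ ≤ ‖f (u * x)‖ + ‖l‖ := norm_sub_le _ _
          _ ≤ C + ‖l‖ := by linarith [hC (u * x)]
      · exact hw.norm.mul_const _
    rw [integral_zero] at hdct
    have hint : ∀ x : ℝ, Integrable (fun u => w u * f (u * x)) ν := by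
      intro x
      have := Integrable.bdd_mul hw
        ((hf.comp (measurable_id.mul_const x)).aestronglyMeasurable)
        (Eventually.of_forall fun u => hC (u * x))
      exact this.congr (Eventually.of_forall fun u => mul_comm _ _)
    have heq : ∀ x : ℝ, (∫ u, w u * (f (u * x) - l) ∂ν)
        = (∫ u, w u * f (u * x) ∂ν) - l := by
      intro x
      have hwl : Integrable (fun u => w u * l) ν := hw.mul_const l
      have : (fun u => w u * (f (u * x) - l)) = fun u => w u * f (u * x) - w u * l := by
        funext u; ring
      rw [this, integral_sub (hint x) hwl, integral_mul_const, hsum, one_mul]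
    have := hdct.congr heq
    have h2 : Tendsto (fun x : ℝ => ((∫ u, w u * f (u * x) ∂ν) - l) + l) atTop
        (𝓝 (0 + l)) := this.add tendsto_const_nhds
    simpa using h2
end

section
/- Let (Ω, μ) be a measure space, S a set, 𝔉 a countably generated filter on S, V a Banach space, and Φ : Ω × S → ℂ with Φ(·,x) integrable for each x. Suppose: (a) sup_{x∈S} ∫_Ω |Φ(u,x)| dμ(u) < ∞; (b) for every ε > 0 there exist K_ε ⊆ Ω with μ(K_ε) < ∞ and F_ε ∈ 𝔉 with sup_{x∈F_ε} ∫_{Ω∖K_ε} |Φ(u,x)| dμ(u) < ε; (c) for every ε > 0 there is δ > 0 such that μ(E) < δ implies sup_{x∈S} ∫_E |Φ(u,x)| dμ(u) < ε; (d) ∫_Ω Φ(u,x) dμ(u) → 1 along 𝔉. Let g : Ω × S → V be bounded, with u ↦ g(u,x) μ-measurable for each x, and such that for μ-a.e. u, g(u,x) → l along 𝔉 (in x). Then ∫_Ω Φ(u,x) g(u,x) dμ(u) → l along 𝔉. -/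
open MeasureTheory Filter Topology

/-- The analytic core of the regularity theorem for Hausdorff-type operators:
under a uniform `L¹` bound, uniform smallness outside sets of finite measure along the filter,
uniform absolute continuity, and normalization `∫ Φ(u,x) dμ → 1` along `𝔉`, for any bounded
family `g` with `g(u,x) → l` along `𝔉` for a.e. `u`, one has
`∫ Φ(u,x) g(u,x) dμ(u) → l` along `𝔉`. -/
theorem stmt_2 {Ω S V : Type*} [MeasurableSpace Ω] (μ : Measure Ω)
    [NormedAddCommGroup V] [NormedSpace ℂ V] [CompleteSpace V]
    (𝔉 : Filter S) [𝔉.IsCountablyGenerated]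
    (Φ : Ω → S → ℂ)
    (hint : ∀ x, Integrable (fun u => Φ u x) μ)
    (ha : ∃ C : ℝ, ∀ x, (∫ u, ‖Φ u x‖ ∂μ) ≤ C)
    (hb : ∀ ε > (0:ℝ), ∃ K : Set Ω, μ K < ⊤ ∧ ∃ F ∈ 𝔉, ∀ x ∈ F,
        (∫ u in Kᶜ, ‖Φ u x‖ ∂μ) < ε)
    (hc : ∀ ε > (0:ℝ), ∃ δ > (0:ℝ), ∀ E : Set Ω, μ E < ENNReal.ofReal δ →
        ∀ x, (∫ u in E, ‖Φ u x‖ ∂μ) < ε)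
    (hd : Tendsto (fun x => ∫ u, Φ u x ∂μ) 𝔉 (𝓝 1))
    (g : Ω → S → V) (l : V)
    (hgb : ∃ C : ℝ, ∀ u x, ‖g u x‖ ≤ C)
    (hgm : ∀ x, AEStronglyMeasurable (fun u => g u x) μ)
    (hgl : ∀ᵐ u ∂μ, Tendsto (fun x => g u x) 𝔉 (𝓝 l)) :
    Tendsto (fun x => ∫ u, Φ u x • g u x ∂μ) 𝔉 (𝓝 l) := by
  obtain ⟨C, hC⟩ := hgb
  obtain ⟨Ca, hCa⟩ := ha
  set Ca' : ℝ := max Ca 0 with hCa'def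
  have hCa' : ∀ x, (∫ u, ‖Φ u x‖ ∂μ) ≤ Ca' := fun x => (hCa x).trans (le_max_left _ _)
  have hCa'0 : 0 ≤ Ca' := le_max_right _ _
  set C' : ℝ := max C 0 + ‖l‖ + 1 with hC'def
  have hC'0 : 0 < C' := by positivity
  have hgC' : ∀ u x, ‖g u x - l‖ ≤ C' := by
    intro u x
    calc ‖g u x - l‖ ≤ ‖g u x‖ + ‖l‖ := norm_sub_le _ _
      _ ≤ max C 0 + ‖l‖ := by gcongr; exact (hC u x).trans (le_max_left _ _)
      _ ≤ C' := by linarith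
  rw [Filter.tendsto_iff_seq_tendsto]
  intro x hx
  -- strongly measurable versions
  set g' : ℕ → Ω → V := fun n => (hgm (x n)).mk _ with hg'def
  have hg'sm : ∀ n, StronglyMeasurable (g' n) := fun n => (hgm (x n)).stronglyMeasurable_mk
  have hae : ∀ᵐ u ∂μ, (∀ n, g' n u = g u (x n)) ∧ Tendsto (fun s => g u s) 𝔉 (𝓝 l) := by
    refine ((ae_all_iff.2 fun n => (hgm (x n)).ae_eq_mk.symm).and hgl)
  have haeT : ∀ᵐ u ∂μ, Tendsto (fun n => g' n u) atTop (𝓝 l) := by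
    filter_upwards [hae] with u ⟨he, ht⟩
    have : Tendsto (fun n => g u (x n)) atTop (𝓝 l) := ht.comp hx
    exact this.congr fun n => (he n).symm
  have haeB : ∀ n, ∀ᵐ u ∂μ, ‖g' n u - l‖ ≤ C' := by
    intro n
    filter_upwards [hae] with u ⟨he, _⟩
    rw [he n]; exact hgC' u (x n)
  have hInt1 : ∀ n, Integrable (fun u => Φ u (x n) • (g' n u - l)) μ := by
    intro n
    refine Integrable.mono' (((hint (x n)).norm).const_mul C')
      ((hint (x n)).aestronglyMeasurable.smul
        (((hg'sm n).sub stronglyMeasurable_const).aestronglyMeasurable)) ?_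
    filter_upwards [haeB n] with u hu
    rw [norm_smul]
    calc ‖Φ u (x n)‖ * ‖g' n u - l‖ ≤ ‖Φ u (x n)‖ * C' := by
          gcongr
      _ = C' * ‖Φ u (x n)‖ := mul_comm _ _
  have key : ∀ n, (∫ u, Φ u (x n) • g u (x n) ∂μ)
      = (∫ u, Φ u (x n) • (g' n u - l) ∂μ) + (∫ u, Φ u (x n) ∂μ) • l := by
    intro n
    have h1 : (∫ u, Φ u (x n) • g u (x n) ∂μ)
        = ∫ u, (Φ u (x n) • (g' n u - l) + Φ u (x n) • l) ∂μ := by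
      refine integral_congr_ae ?_
      filter_upwards [hae] with u ⟨he, _⟩
      rw [← smul_add, sub_add_cancel, he n]
    rw [h1, integral_add (hInt1 n) ((hint (x n)).smul_const l), integral_smul_const]
  -- second term tends to l
  have h2 : Tendsto (fun n => (∫ u, Φ u (x n) ∂μ) • l) atTop (𝓝 l) := by
    have := (hd.comp hx).smul_const l
    simpa using this
  -- main term tends to 0
  have h1 : Tendsto (fun n => ∫ u, Φ u (x n) • (g' n u - l) ∂μ) atTop (𝓝 0) := by
    rw [NormedAddCommGroup.tendsto_nhds_zero]
    intro ε hε
    have hε₁ : (0:ℝ) < ε / (4 * C') := by positivity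
    obtain ⟨K, hKfin, F, hF, hKF⟩ := hb (ε / (4 * C')) hε₁
    obtain ⟨δ, hδ, hδ'⟩ := hc (ε / (4 * C')) hε₁
    set K' : Set Ω := MeasureTheory.toMeasurable μ K with hK'def
    have hK'm : MeasurableSet K' := measurableSet_toMeasurable μ K
    have hK'fin : μ K' ≠ ⊤ := by
      rw [measure_toMeasurable]; exact hKfin.ne
    obtain ⟨t, htK, htm, htμ, hunif⟩ :=
      MeasureTheory.tendstoUniformlyOn_of_ae_tendsto (f := g') (g := fun _ => l)
        hg'sm stronglyMeasurable_const hK'm hK'fin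
        (by filter_upwards [haeT] with u hu _ using hu) (half_pos hδ)
    have htμ' : μ t < ENNReal.ofReal δ :=
      htμ.trans_lt (ENNReal.ofReal_lt_ofReal_iff hδ |>.2 (by linarith))
    set ε₂ : ℝ := ε / (4 * (Ca' + 1)) with hε₂def
    have hε₂ : 0 < ε₂ := by positivity
    have hEv1 : ∀ᶠ n in atTop, x n ∈ F := hx.eventually_mem hF
    have hEv2 : ∀ᶠ n in atTop, ∀ u ∈ K' \ t, dist l (g' n u) < ε₂ :=
      Metric.tendstoUniformlyOn_iff.1 hunif ε₂ hε₂
    filter_upwards [hEv1, hEv2] with n hn1 hn2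
    set φ : Ω → ℂ := fun u => Φ u (x n) with hφdef
    set Fn : Ω → ℝ := fun u => ‖φ u‖ * ‖g' n u - l‖ with hFndef
    have hFnm : AEStronglyMeasurable Fn μ :=
      ((hint (x n)).norm.aestronglyMeasurable).mul
        (((hg'sm n).sub stronglyMeasurable_const).norm.aestronglyMeasurable)
    have hFnInt : Integrable Fn μ := by
      refine Integrable.mono' (((hint (x n)).norm).const_mul C') hFnm ?_
      filter_upwards [haeB n] with u hu
      rw [Real.norm_eq_abs, abs_of_nonneg (by positivity)]
      calc ‖φ u‖ * ‖g' n u - l‖ ≤ ‖φ u‖ * C' := by gcongr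
        _ = C' * ‖φ u‖ := mul_comm _ _
    have hφnorm : Integrable (fun u => ‖φ u‖) μ := (hint (x n)).norm
    -- generic bound on set integrals by C' * ∫ ‖φ‖
    have hsetbd : ∀ A : Set Ω, (∫ u in A, Fn u ∂μ) ≤ C' * ∫ u in A, ‖φ u‖ ∂μ := by
      intro A
      rw [← integral_const_mul]
      refine integral_mono_ae (hFnInt.restrict) ((hφnorm.const_mul C').restrict) ?_
      filter_upwards [ae_restrict_of_ae (haeB n)] with u hu
      calc Fn u = ‖φ u‖ * ‖g' n u - l‖ := rfl
        _ ≤ ‖φ u‖ * C' := by gcongr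
        _ = C' * ‖φ u‖ := mul_comm _ _
    have hφpos : ∀ A : Set Ω, 0 ≤ ∫ u in A, ‖φ u‖ ∂μ :=
      fun A => integral_nonneg fun u => norm_nonneg _
    -- split
    have hsplit1 : (∫ u, Fn u ∂μ) = (∫ u in K', Fn u ∂μ) + ∫ u in K'ᶜ, Fn u ∂μ :=
      (integral_add_compl hK'm hFnInt).symm
    have hsplit2 : (∫ u in K', Fn u ∂μ) = (∫ u in t, Fn u ∂μ) + ∫ u in K' \ t, Fn u ∂μ := by
      rw [← setIntegral_union Set.disjoint_sdiff_right (hK'm.diff htm)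
        (hFnInt.integrableOn) (hFnInt.integrableOn), Set.union_diff_cancel htK]
    -- bound outside K'
    have hout : (∫ u in K'ᶜ, Fn u ∂μ) ≤ C' * (ε / (4 * C')) := by
      refine (hsetbd _).trans ?_
      gcongr
      calc (∫ u in K'ᶜ, ‖φ u‖ ∂μ) ≤ ∫ u in Kᶜ, ‖φ u‖ ∂μ := by
            refine setIntegral_mono_set hφnorm.integrableOn
              (Filter.Eventually.of_forall fun u => norm_nonneg _)
              (HasSubset.Subset.eventuallyLE ?_)
            exact Set.compl_subset_compl.2 (subset_toMeasurable μ K)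
        _ ≤ ε / (4 * C') := (hKF (x n) hn1).le
    -- bound on t
    have hont : (∫ u in t, Fn u ∂μ) ≤ C' * (ε / (4 * C')) := by
      refine (hsetbd _).trans ?_
      gcongr
      exact (hδ' t htμ' (x n)).le
    -- bound on K' \ t
    have honKt : (∫ u in K' \ t, Fn u ∂μ) ≤ ε₂ * Ca' := by
      calc (∫ u in K' \ t, Fn u ∂μ) ≤ ∫ u in K' \ t, ε₂ * ‖φ u‖ ∂μ := by
            refine integral_mono_ae (hFnInt.restrict) ((hφnorm.const_mul ε₂).restrict) ?_
            refine ae_restrict_of_forall_mem (hK'm.diff htm) fun u hu => ?_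
            have := hn2 u hu
            rw [dist_comm, dist_eq_norm] at this
            calc Fn u = ‖φ u‖ * ‖g' n u - l‖ := rfl
              _ ≤ ‖φ u‖ * ε₂ := by have h := this.le; gcongr
              _ = ε₂ * ‖φ u‖ := mul_comm _ _
        _ = ε₂ * ∫ u in K' \ t, ‖φ u‖ ∂μ := integral_const_mul _ _
        _ ≤ ε₂ * ∫ u, ‖φ u‖ ∂μ := by
            gcongr
            exact Filter.Eventually.of_forall fun u => norm_nonneg _
            exact Measure.restrict_le_self
        _ ≤ ε₂ * Ca' := by gcongr; exact hCa' (x n)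
    have hCdiv : C' * (ε / (4 * C')) = ε / 4 := by field_simp
    have hε₂Ca : ε₂ * Ca' < ε / 4 := by
      rw [hε₂def, div_mul_eq_mul_div, div_lt_div_iff₀ (by positivity) (by norm_num)]
      nlinarith
    have hnormle : ‖∫ u, φ u • (g' n u - l) ∂μ‖ ≤ ∫ u, Fn u ∂μ := by
      refine (norm_integral_le_integral_norm _).trans ?_
      refine integral_mono_ae (hInt1 n).norm hFnInt ?_
      exact Filter.Eventually.of_forall fun u => le_of_eq (norm_smul _ _)
    calc ‖∫ u, Φ u (x n) • (g' n u - l) ∂μ‖ = ‖∫ u, φ u • (g' n u - l) ∂μ‖ := rfl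
      _ ≤ ∫ u, Fn u ∂μ := hnormle
      _ = (∫ u in t, Fn u ∂μ) + (∫ u in K' \ t, Fn u ∂μ) + ∫ u in K'ᶜ, Fn u ∂μ := by
          rw [hsplit1, hsplit2]
      _ < ε := by
          have := hont; have := honKt; have := hout
          rw [hCdiv] at *
          linarith
  have := h1.add h2
  rw [zero_add] at this
  refine this.congr fun n => (key n).symm
end

section
/- Let 𝔉 be a countably generated filter on a set S, 𝔉' a filter on S', A_n : S → S' (n ∈ ℕ) maps such that each A_n(𝔉) is a base of 𝔉', c_n : S → ℂ and μ_n > 0 with: (i) sup_{x∈S} Σ_n |c_n(x)| μ_n < ∞; (ii) for every ε > 0 there exist K_ε ⊆ ℕ with Σ_{n∈K_ε} μ_n < ∞ and F_ε ∈ 𝔉 with sup_{x∈F_ε} Σ_{n∉K_ε} |c_n(x)| μ_n < ε; (iii) for every ε > 0 there is δ > 0 such that Σ_{n∈E} μ_n < δ implies sup_{x∈S} Σ_{n∈E} |c_n(x)| μ_n < ε. Then the transformation (ℋf)(x) = Σ_n c_n(x) μ_n f(A_n(x)) is regular with respect to 𝔉, 𝔉' and every Banach space V if and only if Σ_n c_n(x)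 μ_n → 1 along 𝔉. -/
open Filter Topology

/-- Regularity criterion for discrete Hausdorff-type transformations
`(ℋ f)(x) = ∑ₙ cₙ(x) μₙ f(Aₙ(x))`: under conditions (i)–(iii) the transformation is regular
with respect to `𝔉`, `𝔉'` and every Banach space `V` iff `∑ₙ cₙ(x) μₙ → 1` along `𝔉`. -/
theorem stmt_4 {S S' : Type*}
    (𝔉 : Filter S) [𝔉.IsCountablyGenerated] (𝔉' : Filter S')
    (A : ℕ → S → S') (hA : ∀ n, Filter.map (A n) 𝔉 = 𝔉')
    (c : ℕ → S → ℂ) (μ : ℕ → ℝ) (hμ : ∀ n, 0 < μ n)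
    (hi : ∃ C : ℝ, ∀ x, Summable (fun n => ‖c n x‖ * μ n) ∧
        (∑' n, ‖c n x‖ * μ n) ≤ C)
    (hii : ∀ ε > (0:ℝ), ∃ K : Set ℕ, Summable (fun n : K => μ n) ∧
        ∃ F ∈ 𝔉, ∀ x ∈ F, (∑' n : ↥Kᶜ, ‖c (n : ℕ) x‖ * μ n) < ε)
    (hiii : ∀ ε > (0:ℝ), ∃ δ > (0:ℝ), ∀ E : Set ℕ,
        Summable (fun n : E => μ n) → (∑' n : E, μ n) < δ →
        ∀ x, (∑' n : E, ‖c (n : ℕ) x‖ * μ n) < ε) :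
    (∀ (V : Type) (_ : NormedAddCommGroup V) (_ : NormedSpace ℂ V) (_ : CompleteSpace V)
        (f : S' → V), (∃ C : ℝ, ∀ y, ‖f y‖ ≤ C) →
        ∀ l : V, Tendsto f 𝔉' (𝓝 l) →
          Tendsto (fun x => ∑' n, (c n x * (μ n : ℂ)) • f (A n x)) 𝔉 (𝓝 l)) ↔
      Tendsto (fun x => ∑' n, c n x * (μ n : ℂ)) 𝔉 (𝓝 1) := by
  constructor
  · intro hreg
    have h := hreg ℂ inferInstance inferInstance inferInstance (fun _ => 1)
      ⟨1, fun y => by simp⟩ 1 tendsto_const_nhds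
    simpa [smul_eq_mul] using h
  · intro hone V _ _ _ f hbdd l hf
    obtain ⟨Cf, hCf⟩ := hbdd
    obtain ⟨C, hC⟩ := hi
    have hnorm : ∀ x n, ‖c n x * (μ n : ℂ)‖ = ‖c n x‖ * μ n := by
      intro x n
      rw [norm_mul, Complex.norm_real, Real.norm_eq_abs, abs_of_pos (hμ n)]
    set M : ℝ := max Cf 0 + ‖l‖ with hMdef
    have hM0 : 0 ≤ M := add_nonneg (le_max_right _ _) (norm_nonneg _)
    have hfl : ∀ y, ‖f y - l‖ ≤ M := fun y =>
      (norm_sub_le _ _).trans (add_le_add ((hCf y).trans (le_max_left _ _)) le_rfl)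
    have hrnn : ∀ x n, (0:ℝ) ≤ ‖c n x‖ * μ n :=
      fun x n => mul_nonneg (norm_nonneg _) (hμ n).le
    have hsum_a : ∀ x, Summable (fun n => c n x * (μ n : ℂ)) := fun x =>
      ((hC x).1.congr (fun n => (hnorm x n).symm)).of_norm
    have hsum_tn : ∀ x, Summable (fun n => ‖(c n x * (μ n : ℂ)) • (f (A n x) - l)‖) := by
      intro x
      refine Summable.of_nonneg_of_le (fun n => norm_nonneg _) (fun n => ?_)
        ((hC x).1.mul_right M)
      rw [norm_smul, hnorm]
      exact mul_le_mul_of_nonneg_left (hfl _) (hrnn x n)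
    have hsum_t : ∀ x, Summable (fun n => (c n x * (μ n : ℂ)) • (f (A n x) - l)) :=
      fun x => (hsum_tn x).of_norm
    -- key vanishing statement
    have key : Tendsto (fun x => ∑' n, (c n x * (μ n : ℂ)) • (f (A n x) - l)) 𝔉 (𝓝 0) := by
      rw [NormedAddCommGroup.tendsto_nhds_zero]
      intro ε hε
      set ε' : ℝ := ε / 3 / (M + 1) with hε'def
      have hε' : 0 < ε' := by positivity
      obtain ⟨K, hK, F, hF, hKF⟩ := hii ε' hε'
      obtain ⟨δ, hδ0, hδ⟩ := hiii ε' hε'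
      set ν : ℕ → ℝ := K.indicator μ with hνdef
      have hν : Summable ν := (summable_subtype_iff_indicator (s := K) (f := μ)).mp hK
      obtain ⟨T, hT⟩ : ∃ T : Finset ℕ, (∑' n : {x // x ∉ T}, ν n) < δ :=
        ((tendsto_order.1 (tendsto_tsum_compl_atTop_zero ν)).2 δ hδ0).exists
      set E : Set ℕ := K \ (T : Set ℕ) with hEdef
      set Tc : Set ℕ := (T : Set ℕ)ᶜ with hTcdef
      have hνnn : ∀ n, 0 ≤ ν n := fun n => Set.indicator_nonneg (fun m _ => (hμ m).le) n
      have hind_le : E.indicator μ ≤ ν :=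
        Set.indicator_le_indicator_of_subset Set.diff_subset (fun n => (hμ n).le)
      have hEind : Summable (E.indicator μ) :=
        hν.of_nonneg_of_le (fun n => Set.indicator_nonneg (fun m _ => (hμ m).le) n)
          (fun n => hind_le n)
      have hEsum : Summable (fun n : E => μ n) :=
        (summable_subtype_iff_indicator (s := E) (f := μ)).mpr hEind
      have hTcomp : (∑' n : {x // x ∉ T}, ν n) = ∑' n : Tc, ν n := rfl
      have hEδ : (∑' n : E, μ n) < δ := by
        refine lt_of_le_of_lt ?_ hT
        have hmid : (∑' n, E.indicator μ n) ≤ ∑' n, Tc.indicator ν n := by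
          refine Summable.tsum_le_tsum (fun n => ?_) hEind
            (hν.of_nonneg_of_le
              (fun n => Set.indicator_nonneg (fun m _ => hνnn m) n)
              (fun n => Set.indicator_le_self' (fun m _ => hνnn m) n))
          by_cases hnE : n ∈ E
          · rw [Set.indicator_of_mem hnE, Set.indicator_of_mem (by simpa [hTcdef] using hnE.2),
              hνdef, Set.indicator_of_mem hnE.1]
          · rw [Set.indicator_of_notMem hnE]
            exact Set.indicator_nonneg (fun m _ => hνnn m) n
        calc (∑' n : E, μ n) = ∑' n, E.indicator μ n := tsum_subtype E μ
          _ ≤ ∑' n, Tc.indicator ν n := hmid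
          _ = ∑' n : Tc, ν n := (tsum_subtype Tc ν).symm
          _ = ∑' n : {x // x ∉ T}, ν n := hTcomp.symm
      have hEsmall : ∀ x, (∑' n : E, ‖c (n : ℕ) x‖ * μ n) < ε' := hδ E hEsum hEδ
      -- finite part tends to zero
      have hfin : Tendsto (fun x => ∑ n ∈ T, (c n x * (μ n : ℂ)) • (f (A n x) - l)) 𝔉
          (𝓝 0) := by
        have h0 : (0 : V) = ∑ n ∈ T, (0 : V) := by simp
        rw [h0]
        refine tendsto_finset_sum _ fun n _ => ?_
        have h1 : Tendsto (A n) 𝔉 𝔉' := (hA n) ▸ tendsto_map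
        have hAn : Tendsto (fun x => f (A n x) - l) 𝔉 (𝓝 0) := by
          simpa using (hf.comp h1).sub (tendsto_const_nhds (x := l))
        refine squeeze_zero_norm (a := fun x => C * ‖f (A n x) - l‖) (fun x => ?_) ?_
        · rw [norm_smul, hnorm]
          exact mul_le_mul_of_nonneg_right
            (le_trans (Summable.le_tsum (hC x).1 n fun m _ => hrnn x m) (hC x).2) (norm_nonneg _)
        · simpa using (hAn.norm.const_mul C)
      have hfin' := (NormedAddCommGroup.tendsto_nhds_zero.1 hfin) (ε / 3) (by positivity)
      filter_upwards [hF, hfin'] with x hxF hxfin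
      -- split the tsum
      have hsplit := Summable.sum_add_tsum_subtype_compl (hsum_t x) T
      have htail : (∑' n : {m // m ∉ T}, ‖(c (n:ℕ) x * (μ (n:ℕ) : ℂ)) • (f (A n x) - l)‖)
          ≤ (ε' + ε') * M := by
        have hsub_r : Summable (fun n : {m // m ∉ T} => ‖c (n:ℕ) x‖ * μ (n:ℕ)) :=
          (hC x).1.subtype _
        have step1 : (∑' n : {m // m ∉ T}, ‖(c (n:ℕ) x * (μ (n:ℕ) : ℂ)) • (f (A n x) - l)‖)
            ≤ ∑' n : {m // m ∉ T}, (‖c (n:ℕ) x‖ * μ (n:ℕ)) * M := by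
          refine Summable.tsum_le_tsum (fun n => ?_) ((hsum_tn x).subtype _) (hsub_r.mul_right M)
          rw [norm_smul, hnorm]
          exact mul_le_mul_of_nonneg_left (hfl _) (hrnn x _)
        have step2 : (∑' n : {m // m ∉ T}, (‖c (n:ℕ) x‖ * μ (n:ℕ)) * M)
            = (∑' n : {m // m ∉ T}, ‖c (n:ℕ) x‖ * μ (n:ℕ)) * M := tsum_mul_right
        have step3 : (∑' n : {m // m ∉ T}, ‖c (n:ℕ) x‖ * μ (n:ℕ)) ≤ ε' + ε' := by
          have hr := fun n => hrnn x n
          have hrsum := (hC x).1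
          have hindE : Summable (E.indicator fun n => ‖c n x‖ * μ n) :=
            hrsum.of_nonneg_of_le
              (fun n => Set.indicator_nonneg (fun m _ => hr m) n)
              (fun n => Set.indicator_le_self' (fun m _ => hr m) n)
          have hindKc : Summable (Kᶜ.indicator fun n => ‖c n x‖ * μ n) :=
            hrsum.of_nonneg_of_le
              (fun n => Set.indicator_nonneg (fun m _ => hr m) n)
              (fun n => Set.indicator_le_self' (fun m _ => hr m) n)
          have hindTc : Summable (Tc.indicator fun n => ‖c n x‖ * μ n) :=
            hrsum.of_nonneg_of_le
              (fun n => Set.indicator_nonneg (fun m _ => hr m) n)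
              (fun n => Set.indicator_le_self' (fun m _ => hr m) n)
          have hTc2 : (∑' n : {m // m ∉ T}, ‖c (n:ℕ) x‖ * μ (n:ℕ))
              = ∑' n : Tc, ‖c (n:ℕ) x‖ * μ (n:ℕ) := rfl
          have hle : (∑' n, Tc.indicator (fun n => ‖c n x‖ * μ n) n)
              ≤ (∑' n, E.indicator (fun n => ‖c n x‖ * μ n) n)
                + ∑' n, Kᶜ.indicator (fun n => ‖c n x‖ * μ n) n := by
            rw [← Summable.tsum_add hindE hindKc]
            refine Summable.tsum_le_tsum (fun n => ?_) hindTc (hindE.add hindKc)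
            by_cases hnT : n ∈ T
            · rw [Set.indicator_of_notMem (show n ∉ Tc by simp [hTcdef]; exact hnT)]
              exact add_nonneg (Set.indicator_nonneg (fun m _ => hr m) n)
                (Set.indicator_nonneg (fun m _ => hr m) n)
            · rw [Set.indicator_of_mem (show n ∈ Tc by simp [hTcdef]; exact hnT)]
              by_cases hnK : n ∈ K
              · have hnE : n ∈ E := ⟨hnK, by simpa using hnT⟩
                rw [Set.indicator_of_mem hnE]
                exact le_add_of_nonneg_right (Set.indicator_nonneg (fun m _ => hr m) n)
              · rw [Set.indicator_of_mem (show n ∈ Kᶜ by simpa using hnK)]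
                exact le_add_of_nonneg_left (Set.indicator_nonneg (fun m _ => hr m) n)
          calc (∑' n : {m // m ∉ T}, ‖c (n:ℕ) x‖ * μ (n:ℕ))
              = ∑' n, Tc.indicator (fun n => ‖c n x‖ * μ n) n :=
                hTc2.trans (tsum_subtype Tc fun n => ‖c n x‖ * μ n)
            _ ≤ (∑' n, E.indicator (fun n => ‖c n x‖ * μ n) n)
                + ∑' n, Kᶜ.indicator (fun n => ‖c n x‖ * μ n) n := hle
            _ = (∑' n : E, ‖c (n:ℕ) x‖ * μ (n:ℕ))
                + ∑' n : ↥Kᶜ, ‖c (n:ℕ) x‖ * μ (n:ℕ) := by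
                rw [tsum_subtype E (fun n => ‖c n x‖ * μ n),
                  tsum_subtype Kᶜ (fun n => ‖c n x‖ * μ n)]
            _ ≤ ε' + ε' := add_le_add (hEsmall x).le (hKF x hxF).le
        calc (∑' n : {m // m ∉ T}, ‖(c (n:ℕ) x * (μ (n:ℕ) : ℂ)) • (f (A n x) - l)‖)
            ≤ (∑' n : {m // m ∉ T}, ‖c (n:ℕ) x‖ * μ (n:ℕ)) * M := step2 ▸ step1
          _ ≤ (ε' + ε') * M := mul_le_mul_of_nonneg_right step3 hM0
      have hεM : (ε' + ε') * M ≤ 2 * (ε / 3) := by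
        have h1 : ε' * (M + 1) = ε / 3 := by
          rw [hε'def]; field_simp
        nlinarith [hε'.le, hM0]
      calc ‖∑' n, (c n x * (μ n : ℂ)) • (f (A n x) - l)‖
          = ‖(∑ n ∈ T, (c n x * (μ n : ℂ)) • (f (A n x) - l))
              + ∑' n : {m // m ∉ T}, (c (n:ℕ) x * (μ (n:ℕ) : ℂ)) • (f (A n x) - l)‖ := by
            rw [hsplit]
        _ ≤ ‖∑ n ∈ T, (c n x * (μ n : ℂ)) • (f (A n x) - l)‖
              + ‖∑' n : {m // m ∉ T}, (c (n:ℕ) x * (μ (n:ℕ) : ℂ)) • (f (A n x) - l)‖ :=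
            norm_add_le _ _
        _ ≤ ‖∑ n ∈ T, (c n x * (μ n : ℂ)) • (f (A n x) - l)‖
              + ∑' n : {m // m ∉ T}, ‖(c (n:ℕ) x * (μ (n:ℕ) : ℂ)) • (f (A n x) - l)‖ :=
            add_le_add_right (norm_tsum_le_tsum_norm ((hsum_tn x).subtype _)) _
        _ < ε / 3 + (ε' + ε') * M := by
            exact add_lt_add_of_lt_of_le hxfin htail
        _ ≤ ε / 3 + 2 * (ε / 3) := add_le_add_right hεM _
        _ = ε := by ring
    -- assemble
    have heq : ∀ x, (∑' n, (c n x * (μ n : ℂ)) • f (A n x)) =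
        (∑' n, (c n x * (μ n : ℂ)) • (f (A n x) - l)) + (∑' n, c n x * (μ n : ℂ)) • l := by
      intro x
      rw [← Summable.tsum_smul_const (hsum_a x), ← Summable.tsum_add (hsum_t x) ((hsum_a x).smul_const l)]
      refine tsum_congr fun n => ?_
      rw [smul_sub, sub_add_cancel]
    have h2 : Tendsto (fun x => (∑' n, (c n x * (μ n : ℂ)) • (f (A n x) - l))
        + (∑' n, c n x * (μ n : ℂ)) • l) 𝔉 (𝓝 ((0 : V) + (1 : ℂ) • l)) :=
      key.add (hone.smul_const l)
    rw [zero_add, one_smul] at h2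
    exact h2.congr fun x => (heq x).symm
end

section
/- Let 𝔉 be a countably generated filter on S, 𝔉' a filter on S', A_n : S → S' maps with each A_n(𝔉) a base of 𝔉', (μ_n) a sequence of positive reals decreasing to 0, and c_n : S → ℂ such that Σ_n |c_n(x)| converges on S to a bounded function. Then (ℋf)(x) = Σ_n c_n(x) μ_n f(A_n(x)) is regular with respect to 𝔉, 𝔉' and every Banach space V if and only if Σ_n c_n(x) μ_n → 1 along 𝔉. -/
open Filter Topology

set_option maxHeartbeats 1000000 in
/-- Discrete regularity criterion under the simpler condition `(v_d)`: if `μₙ ↓ 0` and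
`∑ₙ |cₙ(x)|` converges on `S` to a bounded function, then `(ℋ f)(x) = ∑ₙ cₙ(x) μₙ f(Aₙ(x))`
is regular with respect to `𝔉`, `𝔉'` and every Banach space `V` iff
`∑ₙ cₙ(x) μₙ → 1` along `𝔉`. -/
theorem stmt_6 {S S' : Type*}
    (𝔉 : Filter S) [𝔉.IsCountablyGenerated] (𝔉' : Filter S')
    (A : ℕ → S → S') (hA : ∀ n, Filter.map (A n) 𝔉 = 𝔉')
    (c : ℕ → S → ℂ) (μ : ℕ → ℝ) (hμpos : ∀ n, 0 < μ n)
    (hμanti : Antitone μ) (hμ0 : Tendsto μ atTop (𝓝 0))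
    (hc : ∃ C : ℝ, ∀ x, Summable (fun n => ‖c n x‖) ∧ (∑' n, ‖c n x‖) ≤ C) :
    (∀ (V : Type) (_ : NormedAddCommGroup V) (_ : NormedSpace ℂ V) (_ : CompleteSpace V)
        (f : S' → V), (∃ C : ℝ, ∀ y, ‖f y‖ ≤ C) →
        ∀ l : V, Tendsto f 𝔉' (𝓝 l) →
          Tendsto (fun x => ∑' n, (c n x * (μ n : ℂ)) • f (A n x)) 𝔉 (𝓝 l)) ↔
      Tendsto (fun x => ∑' n, c n x * (μ n : ℂ)) 𝔉 (𝓝 1) := by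
  constructor
  · intro h
    have := h ℂ inferInstance inferInstance inferInstance (fun _ => 1)
      ⟨1, fun y => by simp⟩ 1 tendsto_const_nhds
    simpa using this
  · intro h1 V _ _ _ f hf l hfl
    obtain ⟨Cf, hCf⟩ := hf
    obtain ⟨C, hC⟩ := hc
    set C₀ : ℝ := max C 0 with hC₀def
    have hC₀0 : 0 ≤ C₀ := le_max_right _ _
    have hCx : ∀ x, (∑' n, ‖c n x‖) ≤ C₀ := fun x => ((hC x).2).trans (le_max_left _ _)
    have hcn : ∀ n x, ‖c n x‖ ≤ C₀ := fun n x =>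
      (Summable.le_tsum (hC x).1 n (fun m _ => norm_nonneg _)).trans (hCx x)
    set M : ℝ := max (Cf + ‖l‖) 1 with hMdef
    have hM0 : (0:ℝ) ≤ M := le_trans zero_le_one (le_max_right _ _)
    have hfb : ∀ y, ‖f y - l‖ ≤ M := fun y =>
      (norm_sub_le _ _).trans ((add_le_add_left (hCf y) _).trans (le_max_left _ _))
    have hμnn : ∀ n, 0 ≤ μ n := fun n => (hμpos n).le
    -- norm of general term
    have hnorm : ∀ n x, ‖(c n x * (μ n : ℂ)) • (f (A n x) - l)‖
        = ‖c n x‖ * μ n * ‖f (A n x) - l‖ := by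
      intro n x
      rw [norm_smul, norm_mul, Complex.norm_real, Real.norm_of_nonneg (hμnn n)]
    -- summability facts
    have hsn : ∀ x, Summable (fun n => ‖(c n x * (μ n : ℂ)) • (f (A n x) - l)‖) := by
      intro x
      apply Summable.of_nonneg_of_le (fun n => norm_nonneg _)
        (f := fun n => ‖c n x‖ * (μ 0 * M))
      · intro n
        rw [hnorm]
        calc ‖c n x‖ * μ n * ‖f (A n x) - l‖ ≤ ‖c n x‖ * μ 0 * M := by
              apply mul_le_mul (mul_le_mul le_rfl (hμanti (Nat.zero_le n)) (hμnn n)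
                (norm_nonneg _)) (hfb _) (norm_nonneg _)
                (mul_nonneg (norm_nonneg _) (hμnn 0))
          _ = ‖c n x‖ * (μ 0 * M) := by ring
      · exact (hC x).1.mul_right _
    have hsum : ∀ x, Summable (fun n => (c n x * (μ n : ℂ)) • (f (A n x) - l)) :=
      fun x => (hsn x).of_norm
    have hsumc : ∀ x, Summable (fun n => c n x * (μ n : ℂ)) := by
      intro x
      apply Summable.of_norm
      apply Summable.of_nonneg_of_le (fun n => norm_nonneg _)
        (f := fun n => ‖c n x‖ * μ 0)
      · intro n
        rw [norm_mul, Complex.norm_real, Real.norm_of_nonneg (hμnn n)]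
        exact mul_le_mul le_rfl (hμanti (Nat.zero_le n)) (hμnn n) (norm_nonneg _)
      · exact (hC x).1.mul_right _
    -- the key: the "centered" sum tends to 0
    have key : Tendsto (fun x => ∑' n, (c n x * (μ n : ℂ)) • (f (A n x) - l)) 𝔉 (𝓝 0) := by
      rw [NormedAddCommGroup.tendsto_nhds_zero]
      intro ε hε
      have hCM : Tendsto (fun n => C₀ * M * μ n) atTop (𝓝 0) := by
        simpa using hμ0.const_mul (C₀ * M)
      obtain ⟨N, hN⟩ := (hCM.eventually_lt_const (by positivity : (0:ℝ) < ε/2)).exists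
      -- head tends to zero
      have hhead : Tendsto (fun x => ∑ n ∈ Finset.range N,
          (c n x * (μ n : ℂ)) • (f (A n x) - l)) 𝔉 (𝓝 0) := by
        have hterm : ∀ n, Tendsto (fun x => (c n x * (μ n : ℂ)) • (f (A n x) - l)) 𝔉 (𝓝 0) := by
          intro n
          have hAf : Tendsto (fun x => f (A n x)) 𝔉 (𝓝 l) := by
            have : Tendsto f (Filter.map (A n) 𝔉) (𝓝 l) := by rw [hA n]; exact hfl
            exact this.comp (tendsto_map)
          apply squeeze_zero_norm (a := fun x => (C₀ * μ 0) * ‖f (A n x) - l‖)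
          · intro x
            rw [hnorm]
            have h1 : ‖c n x‖ * μ n ≤ C₀ * μ 0 :=
              mul_le_mul (hcn n x) (hμanti (Nat.zero_le n)) (hμnn n) hC₀0
            exact mul_le_mul_of_nonneg_right h1 (norm_nonneg _)
          · have : Tendsto (fun x => f (A n x) - l) 𝔉 (𝓝 0) := by
              simpa using hAf.sub_const l
            simpa using this.norm.const_mul (C₀ * μ 0)
        have := tendsto_finset_sum (Finset.range N)
          (fun n _ => hterm n)
        simpa using this
      rw [NormedAddCommGroup.tendsto_nhds_zero] at hhead
      filter_upwards [hhead (ε/2) (by positivity)] with x hx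
      -- split the sum
      have hdecomp := Summable.sum_add_tsum_nat_add (f := fun n => (c n x * (μ n : ℂ)) • (f (A n x) - l))
        N (hsum x)
      have htailnorm : ‖∑' i, (c (i + N) x * (μ (i + N) : ℂ)) • (f (A (i + N) x) - l)‖
          ≤ C₀ * M * μ N := by
        have hsn' : Summable (fun i => ‖(c (i + N) x * (μ (i + N) : ℂ)) • (f (A (i + N) x) - l)‖) :=
          ((summable_nat_add_iff N).2 (hsn x))
        calc ‖∑' i, (c (i + N) x * (μ (i + N) : ℂ)) • (f (A (i + N) x) - l)‖
            ≤ ∑' i, ‖(c (i + N) x * (μ (i + N) : ℂ)) • (f (A (i + N) x) - l)‖ :=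
              norm_tsum_le_tsum_norm hsn'
          _ ≤ ∑' i, ‖c (i + N) x‖ * (μ N * M) := by
              apply Summable.tsum_le_tsum _ hsn' (((summable_nat_add_iff N).2 (hC x).1).mul_right _)
              intro i
              rw [hnorm]
              calc ‖c (i + N) x‖ * μ (i + N) * ‖f (A (i + N) x) - l‖
                  ≤ ‖c (i + N) x‖ * μ N * M := by
                    apply mul_le_mul (mul_le_mul le_rfl (hμanti (Nat.le_add_left N i))
                      (hμnn _) (norm_nonneg _)) (hfb _) (norm_nonneg _)
                      (mul_nonneg (norm_nonneg _) (hμnn N))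
                _ = ‖c (i + N) x‖ * (μ N * M) := by ring
          _ = (∑' i, ‖c (i + N) x‖) * (μ N * M) := tsum_mul_right
          _ ≤ C₀ * (μ N * M) := by
              apply mul_le_mul_of_nonneg_right _ (mul_nonneg (hμnn N) hM0)
              have h2 := Summable.sum_add_tsum_nat_add (f := fun n => ‖c n x‖) N (hC x).1
              have h3 : (0:ℝ) ≤ ∑ i ∈ Finset.range N, ‖c i x‖ :=
                Finset.sum_nonneg fun i _ => norm_nonneg _
              linarith [hCx x]
          _ = C₀ * M * μ N := by ring
      calc ‖∑' n, (c n x * (μ n : ℂ)) • (f (A n x) - l)‖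
          = ‖(∑ n ∈ Finset.range N, (c n x * (μ n : ℂ)) • (f (A n x) - l))
              + ∑' i, (c (i + N) x * (μ (i + N) : ℂ)) • (f (A (i + N) x) - l)‖ := by
            rw [hdecomp]
        _ ≤ ‖∑ n ∈ Finset.range N, (c n x * (μ n : ℂ)) • (f (A n x) - l)‖
              + ‖∑' i, (c (i + N) x * (μ (i + N) : ℂ)) • (f (A (i + N) x) - l)‖ :=
            norm_add_le _ _
        _ < ε/2 + ε/2 := add_lt_add_of_lt_of_le hx (htailnorm.trans hN.le)
        _ = ε := by ring
    -- finish
    have hsplit : (fun x => ∑' n, (c n x * (μ n : ℂ)) • f (A n x))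
        = fun x => (∑' n, (c n x * (μ n : ℂ)) • (f (A n x) - l))
            + (∑' n, c n x * (μ n : ℂ)) • l := by
      funext x
      rw [← Summable.tsum_smul_const (hsumc x) l, ← Summable.tsum_add (hsum x) ((hsumc x).smul_const l)]
      congr 1
      funext n
      rw [smul_sub]
      abel
    rw [hsplit]
    have := key.add (h1.smul_const l)
    simpa using this
end

section
/- Under the hypotheses of the main regularity theorem (conditions (i)–(iii) on the kernel Φ, countably generated filter 𝔉 on S = S', family A(u) : S → S agreeing with 𝔉), let a : S → ℂ be bounded with lim_{𝔉} a = α. Then the operator T_a f = a·f + ℋ_{Φ,A,μ} f is regular with respect to 𝔉 and every Banach space V if and only if ∫_Ω Φ(u,x) dμ(u) → 1 − α along 𝔉. -/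
open MeasureTheory Filter Topology

/-- Key lemma: the Hausdorff operator part annihilates bounded functions tending to `0`. -/
private lemma aux_kernel_zero {Ω S : Type*} [MeasurableSpace Ω] (μ : Measure Ω)
    (𝔉 : Filter S) [𝔉.IsCountablyGenerated]
    (A : Ω → S → S) (hA : ∀ᵐ u ∂μ, Filter.map (A u) 𝔉 = 𝔉)
    (Φ : Ω → S → ℂ)
    (hint : ∀ x, Integrable (fun u => Φ u x) μ)
    (hia : ∃ C : ℝ, ∀ x, (∫ u, ‖Φ u x‖ ∂μ) ≤ C)
    (hii : ∀ ε > (0:ℝ), ∃ K : Set Ω, μ K < ⊤ ∧ ∃ F ∈ 𝔉, ∀ x ∈ F,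
        (∫ u in Kᶜ, ‖Φ u x‖ ∂μ) < ε)
    (hiii : ∀ ε > (0:ℝ), ∃ δ > (0:ℝ), ∀ E : Set Ω, μ E < ENNReal.ofReal δ →
        ∀ x, (∫ u in E, ‖Φ u x‖ ∂μ) < ε)
    {V : Type} [NormedAddCommGroup V] [NormedSpace ℂ V]
    (g : S → V) (Cg : ℝ) (hCg : 0 < Cg) (hg_bdd : ∀ y, ‖g y‖ ≤ Cg)
    (hg_meas : ∀ x, AEStronglyMeasurable (fun u => g (A u x)) μ)
    (hg0 : Tendsto g 𝔉 (𝓝 0)) :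
    Tendsto (fun x => ∫ u, Φ u x • g (A u x) ∂μ) 𝔉 (𝓝 0) := by
  obtain ⟨CΦ₀, hCΦ₀⟩ := hia
  set CΦ : ℝ := max CΦ₀ 0 with hCΦdef
  have hCΦnn : 0 ≤ CΦ := le_max_right _ _
  have hCΦ : ∀ x, (∫ u, ‖Φ u x‖ ∂μ) ≤ CΦ := fun x => (hCΦ₀ x).trans (le_max_left _ _)
  -- integrability of the norm product
  have hB : ∀ y, Integrable (fun u => ‖Φ u y‖ * ‖g (A u y)‖) μ := by
    intro y
    refine Integrable.mono' ((hint y).norm.mul_const Cg)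
      (((hint y).aestronglyMeasurable.norm).mul (hg_meas y).norm) ?_
    filter_upwards with u
    rw [Real.norm_of_nonneg (mul_nonneg (norm_nonneg _) (norm_nonneg _))]
    exact mul_le_mul_of_nonneg_left (hg_bdd _) (norm_nonneg _)
  rw [tendsto_iff_seq_tendsto]
  intro x hx
  rw [NormedAddCommGroup.tendsto_nhds_zero]
  intro ε hε
  set ε' : ℝ := ε / (2 * Cg + CΦ + 1) with hε'def
  have hD : 0 < 2 * Cg + CΦ + 1 := by linarith
  have hε' : 0 < ε' := div_pos hε hD
  obtain ⟨K, hKfin, F, hF, hKF⟩ := hii ε' hε'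
  set K' : Set Ω := toMeasurable μ K with hK'def
  have hK'm : MeasurableSet K' := measurableSet_toMeasurable μ K
  have hK'fin : μ K' ≠ ⊤ := by
    rw [hK'def, measure_toMeasurable]; exact hKfin.ne
  have hK'compl : ∀ y ∈ F, (∫ u in K'ᶜ, ‖Φ u y‖ ∂μ) < ε' := by
    intro y hy
    refine lt_of_le_of_lt ?_ (hKF y hy)
    refine setIntegral_mono_set (hint y).norm.integrableOn ?_ ?_
    · filter_upwards with u using norm_nonneg _
    · exact (Set.compl_subset_compl.mpr (subset_toMeasurable μ K)).eventuallyLE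
  obtain ⟨δ, hδ, hδ'⟩ := hiii ε' hε'
  -- measurable versions of u ↦ g (A u (x n))
  set H : ℕ → Ω → V := fun n => (hg_meas (x n)).mk _ with hHdef
  have hHsm : ∀ n, StronglyMeasurable (H n) := fun n => (hg_meas (x n)).stronglyMeasurable_mk
  have hHae : ∀ n, (fun u => g (A u (x n))) =ᵐ[μ] H n := fun n => (hg_meas (x n)).ae_eq_mk
  -- a.e. convergence of norms to 0
  have haecv : ∀ᵐ u ∂μ, u ∈ K' → Tendsto (fun n => ‖H n u‖) atTop (𝓝 (0:ℝ)) := by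
    filter_upwards [hA, ae_all_iff.2 hHae] with u hu huH _
    have h1 : Tendsto (fun y => g (A u y)) 𝔉 (𝓝 0) := by
      have : Tendsto g (Filter.map (A u) 𝔉) (𝓝 0) := by rw [hu]; exact hg0
      exact this.comp tendsto_map
    have h2 : Tendsto (fun n => g (A u (x n))) atTop (𝓝 0) := h1.comp hx
    have h3 : Tendsto (fun n => ‖g (A u (x n))‖) atTop (𝓝 ‖(0:V)‖) := h2.norm
    rw [norm_zero] at h3
    refine h3.congr fun n => ?_
    rw [huH n]
  -- Egorov
  obtain ⟨t, hts, htm, htμ, htu⟩ := tendstoUniformlyOn_of_ae_tendsto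
    (f := fun n u => ‖H n u‖) (g := fun _ => (0:ℝ)) (μ := μ)
    (fun n => (hHsm n).norm) stronglyMeasurable_const hK'm hK'fin
    (by filter_upwards [haecv] with u hu hus using hu hus) (half_pos hδ)
  have htμ' : μ t < ENNReal.ofReal δ :=
    lt_of_le_of_lt htμ ((ENNReal.ofReal_lt_ofReal_iff hδ).2 (half_lt_self hδ))
  rw [Metric.tendstoUniformlyOn_iff] at htu
  obtain ⟨N, hN⟩ := (htu ε' hε').exists_forall_of_atTop
  have hxF : ∀ᶠ n in atTop, x n ∈ F := hx hF
  filter_upwards [hxF, eventually_ge_atTop N] with n hnF hnN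
  set y : S := x n with hydef
  have hBi := hB y
  -- the integrable a.e.-equal version with H n
  have hBi' : Integrable (fun u => ‖Φ u y‖ * ‖H n u‖) μ := by
    refine hBi.congr ?_
    filter_upwards [hHae n] with u hu
    rw [hu]
  have hnorm : ‖∫ u, Φ u y • g (A u y) ∂μ‖ ≤ ∫ u, ‖Φ u y‖ * ‖g (A u y)‖ ∂μ := by
    refine (norm_integral_le_integral_norm _).trans_eq ?_
    congr 1
    funext u
    rw [norm_smul]
  refine lt_of_le_of_lt hnorm ?_
  -- split the integral
  have hsplit1 : (∫ u, ‖Φ u y‖ * ‖g (A u y)‖ ∂μ)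
      = (∫ u in K', ‖Φ u y‖ * ‖g (A u y)‖ ∂μ) + ∫ u in K'ᶜ, ‖Φ u y‖ * ‖g (A u y)‖ ∂μ :=
    (integral_add_compl hK'm hBi).symm
  have hKeq : t ∪ (K' \ t) = K' := Set.union_diff_cancel hts
  have hsplit2 : (∫ u in K', ‖Φ u y‖ * ‖g (A u y)‖ ∂μ)
      = (∫ u in t, ‖Φ u y‖ * ‖g (A u y)‖ ∂μ) + ∫ u in K' \ t, ‖Φ u y‖ * ‖g (A u y)‖ ∂μ := by
    have h := setIntegral_union (f := fun u => ‖Φ u y‖ * ‖g (A u y)‖) (μ := μ)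
      disjoint_sdiff_self_right (hK'm.diff htm) hBi.integrableOn hBi.integrableOn
    rwa [hKeq] at h
  -- bound on K'ᶜ
  have hb1 : (∫ u in K'ᶜ, ‖Φ u y‖ * ‖g (A u y)‖ ∂μ) ≤ ε' * Cg := by
    have h1 : (∫ u in K'ᶜ, ‖Φ u y‖ * ‖g (A u y)‖ ∂μ) ≤ ∫ u in K'ᶜ, ‖Φ u y‖ * Cg ∂μ := by
      refine setIntegral_mono hBi.integrableOn ((hint y).norm.mul_const Cg).integrableOn ?_
      intro u
      exact mul_le_mul_of_nonneg_left (hg_bdd _) (norm_nonneg _)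
    have h2 : (∫ u in K'ᶜ, ‖Φ u y‖ * Cg ∂μ) = (∫ u in K'ᶜ, ‖Φ u y‖ ∂μ) * Cg :=
      integral_mul_const Cg _
    rw [h2] at h1
    exact h1.trans (mul_le_mul_of_nonneg_right (hK'compl y hnF).le hCg.le)
  -- bound on t
  have hb2 : (∫ u in t, ‖Φ u y‖ * ‖g (A u y)‖ ∂μ) ≤ ε' * Cg := by
    have h1 : (∫ u in t, ‖Φ u y‖ * ‖g (A u y)‖ ∂μ) ≤ ∫ u in t, ‖Φ u y‖ * Cg ∂μ := by
      refine setIntegral_mono hBi.integrableOn ((hint y).norm.mul_const Cg).integrableOn ?_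
      intro u
      exact mul_le_mul_of_nonneg_left (hg_bdd _) (norm_nonneg _)
    have h2 : (∫ u in t, ‖Φ u y‖ * Cg ∂μ) = (∫ u in t, ‖Φ u y‖ ∂μ) * Cg :=
      integral_mul_const Cg _
    rw [h2] at h1
    exact h1.trans (mul_le_mul_of_nonneg_right (hδ' t htμ' y).le hCg.le)
  -- bound on K' \ t
  have hb3 : (∫ u in K' \ t, ‖Φ u y‖ * ‖g (A u y)‖ ∂μ) ≤ CΦ * ε' := by
    have heq : (∫ u in K' \ t, ‖Φ u y‖ * ‖g (A u y)‖ ∂μ)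
        = ∫ u in K' \ t, ‖Φ u y‖ * ‖H n u‖ ∂μ := by
      refine setIntegral_congr_ae (hK'm.diff htm) ?_
      filter_upwards [hHae n] with u hu _
      rw [hu]
    rw [heq]
    have h1 : (∫ u in K' \ t, ‖Φ u y‖ * ‖H n u‖ ∂μ) ≤ ∫ u in K' \ t, ‖Φ u y‖ * ε' ∂μ := by
      refine setIntegral_mono_on hBi'.integrableOn
        ((hint y).norm.mul_const ε').integrableOn (hK'm.diff htm) ?_
      intro u hu
      have := hN n hnN u hu
      rw [dist_zero_left, Real.norm_of_nonneg (norm_nonneg _)] at this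
      exact mul_le_mul_of_nonneg_left this.le (norm_nonneg _)
    have h2 : (∫ u in K' \ t, ‖Φ u y‖ * ε' ∂μ) = (∫ u in K' \ t, ‖Φ u y‖ ∂μ) * ε' :=
      integral_mul_const ε' _
    have h3 : (∫ u in K' \ t, ‖Φ u y‖ ∂μ) ≤ CΦ := by
      refine le_trans ?_ (hCΦ y)
      exact setIntegral_le_integral (hint y).norm (by filter_upwards with u using norm_nonneg _)
    rw [h2] at h1
    exact h1.trans (mul_le_mul_of_nonneg_right h3 hε'.le)
  have htotal : (∫ u, ‖Φ u y‖ * ‖g (A u y)‖ ∂μ) ≤ ε' * Cg + ε' * Cg + CΦ * ε' := by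
    rw [hsplit1, hsplit2]; linarith
  refine htotal.trans_lt ?_
  have : ε' * (2 * Cg + CΦ + 1) = ε := div_mul_cancel₀ ε hD.ne'
  nlinarith

/-- Regularity criterion for Hausdorff-type operators of the second kind
`T_a f = a·f + ℋ_{Φ,A,μ} f`: under conditions (i)–(iii) on `Φ`, with `A(u)(𝔉)` a base of `𝔉`
for a.e. `u`, `a` bounded with `a → α` along `𝔉`, the operator `T_a` is regular with respect
to `𝔉` and every Banach space `V` iff `∫ Φ(u,x) dμ(u) → 1 − α` along `𝔉`. -/
theorem stmt_8 {Ω S : Type*} [MeasurableSpace Ω] (μ : Measure Ω)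
    (𝔉 : Filter S) [𝔉.IsCountablyGenerated]
    (A : Ω → S → S) (hA : ∀ᵐ u ∂μ, Filter.map (A u) 𝔉 = 𝔉)
    (Φ : Ω → S → ℂ)
    (hint : ∀ x, Integrable (fun u => Φ u x) μ)
    (hia : ∃ C : ℝ, ∀ x, (∫ u, ‖Φ u x‖ ∂μ) ≤ C)
    (hib : ∀ u, ∃ C : ℝ, ∀ x, ‖Φ u x‖ ≤ C)
    (hii : ∀ ε > (0:ℝ), ∃ K : Set Ω, μ K < ⊤ ∧ ∃ F ∈ 𝔉, ∀ x ∈ F,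
        (∫ u in Kᶜ, ‖Φ u x‖ ∂μ) < ε)
    (hiii : ∀ ε > (0:ℝ), ∃ δ > (0:ℝ), ∀ E : Set Ω, μ E < ENNReal.ofReal δ →
        ∀ x, (∫ u in E, ‖Φ u x‖ ∂μ) < ε)
    (a : S → ℂ) (ha_bdd : ∃ C : ℝ, ∀ x, ‖a x‖ ≤ C)
    (α : ℂ) (ha_lim : Tendsto a 𝔉 (𝓝 α)) :
    (∀ (V : Type) (_ : NormedAddCommGroup V) (_ : NormedSpace ℂ V) (_ : CompleteSpace V)
        (f : S → V), (∃ C : ℝ, ∀ y, ‖f y‖ ≤ C) →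
        (∀ x, AEStronglyMeasurable (fun u => f (A u x)) μ) →
        ∀ l : V, Tendsto f 𝔉 (𝓝 l) →
          Tendsto (fun x => a x • f x + ∫ u, Φ u x • f (A u x) ∂μ) 𝔉 (𝓝 l)) ↔
      Tendsto (fun x => ∫ u, Φ u x ∂μ) 𝔉 (𝓝 (1 - α)) := by
  constructor
  · intro h
    have h1 := h ℂ inferInstance inferInstance inferInstance (fun _ => 1)
      ⟨1, fun y => by simp⟩ (fun x => aestronglyMeasurable_const) 1 tendsto_const_nhds
    simp only [smul_eq_mul, mul_one] at h1
    have h2 := h1.sub ha_lim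
    exact h2.congr fun x => by ring
  · intro hΦlim V _ _ _ f hf_bdd hf_meas l hf_lim
    obtain ⟨Cf, hCf⟩ := hf_bdd
    obtain ⟨Ca₀, hCa₀⟩ := ha_bdd
    set Ca : ℝ := max Ca₀ 0 with hCadef
    have hCa : ∀ x, ‖a x‖ ≤ Ca := fun x => (hCa₀ x).trans (le_max_left _ _)
    set g : S → V := fun y => f y - l with hgdef
    set Cg : ℝ := max (Cf + ‖l‖) 1 with hCgdef
    have hCgpos : 0 < Cg := lt_of_lt_of_le one_pos (le_max_right _ _)
    have hg_bdd : ∀ y, ‖g y‖ ≤ Cg := by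
      intro y
      calc ‖f y - l‖ ≤ ‖f y‖ + ‖l‖ := norm_sub_le _ _
        _ ≤ Cf + ‖l‖ := by linarith [hCf y]
        _ ≤ Cg := le_max_left _ _
    have hg_meas : ∀ x, AEStronglyMeasurable (fun u => g (A u x)) μ :=
      fun x => (hf_meas x).sub aestronglyMeasurable_const
    have hg0 : Tendsto g 𝔉 (𝓝 0) := by
      have := hf_lim.sub_const l
      rwa [sub_self] at this
    have hkey : Tendsto (fun x => ∫ u, Φ u x • g (A u x) ∂μ) 𝔉 (𝓝 0) :=
      aux_kernel_zero μ 𝔉 A hA Φ hint hia hii hiii g Cg hCgpos hg_bdd hg_meas hg0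
    -- integrability of Φ • g(A · x)
    have hIg : ∀ x, Integrable (fun u => Φ u x • g (A u x)) μ := by
      intro x
      refine Integrable.mono' ((hint x).norm.mul_const Cg)
        ((hint x).aestronglyMeasurable.smul (hg_meas x)) ?_
      filter_upwards with u
      rw [norm_smul]
      exact mul_le_mul_of_nonneg_left (hg_bdd _) (norm_nonneg _)
    have hIl : ∀ x, Integrable (fun u => Φ u x • l) μ := fun x => (hint x).smul_const l
    -- pointwise identity
    have hpt : ∀ x, a x • f x + ∫ u, Φ u x • f (A u x) ∂μ
        = (a x • g x + ∫ u, Φ u x • g (A u x) ∂μ) + (a x + ∫ u, Φ u x ∂μ) • l := by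
      intro x
      have he : (fun u => Φ u x • f (A u x)) = fun u => Φ u x • g (A u x) + Φ u x • l := by
        funext u
        rw [hgdef]
        simp [smul_sub]
      rw [he, integral_add (hIg x) (hIl x), integral_smul_const]
      rw [hgdef]
      simp only [smul_sub]
      module
    -- limits
    have hag : Tendsto (fun x => a x • g x) 𝔉 (𝓝 0) := by
      have hb : Tendsto (fun x => Ca * ‖g x‖) 𝔉 (𝓝 0) := by
        have : Tendsto (fun x => Ca * ‖g x‖) 𝔉 (𝓝 (Ca * ‖(0:V)‖)) :=
          (hg0.norm).const_mul Ca
        simpa using this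
      refine squeeze_zero_norm (a := fun x => Ca * ‖g x‖) (fun x => ?_) hb
      rw [norm_smul]
      exact mul_le_mul_of_nonneg_right (hCa x) (norm_nonneg _)
    have hsum : Tendsto (fun x => a x + ∫ u, Φ u x ∂μ) 𝔉 (𝓝 1) := by
      have := ha_lim.add hΦlim
      rwa [add_sub_cancel] at this
    have hsuml : Tendsto (fun x => (a x + ∫ u, Φ u x ∂μ) • l) 𝔉 (𝓝 ((1:ℂ) • l)) :=
      hsum.smul tendsto_const_nhds
    rw [one_smul] at hsuml
    have htot : Tendsto (fun x => (a x • g x + ∫ u, Φ u x • g (A u x) ∂μ)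
        + (a x + ∫ u, Φ u x ∂μ) • l) 𝔉 (𝓝 ((0 + 0) + l)) :=
      (hag.add hkey).add hsuml
    rw [add_zero, zero_add] at htot
    exact htot.congr fun x => (hpt x).symm
end

section
/- Let Ω be a topological space with Borel measure μ, G a σ-compact locally compact group, A : Ω → Aut(G) continuous (Aut(G) with the Braconnier topology, so that (u,x) ↦ A(u)(x) is separately continuous in u for each x), and Φ : Ω × G → ℂ a kernel satisfying conditions (i)–(iii) of the main theorem together with ∫_Ω Φ(u,x) dμ(u) → 1 as x → ∞ in G. Then for every Banach space V and every bounded Borel measurable f : G → V with f(x) → l as x → ∞, one has (ℋ_{Φ,A,μ} f)(x) = ∫_Ω Φ(u,x) f(A(u)(x)) dμ(u) → l as x → ∞. -/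
open MeasureTheory Filter Topology

/-- Regularity of Hausdorff-type operators on a σ-compact locally compact group: if the family
of topological automorphisms `u ↦ A u` is pointwise continuous in `u`, the kernel `Φ` satisfies
conditions (i)–(iii), and `∫ Φ(u,x) dμ(u) → 1` as `x → ∞` (along the cocompact filter), then for
every Banach space `V` and every bounded Borel measurable `f : G → V` with `f(x) → l` as
`x → ∞` one has `(ℋ_{Φ,A,μ} f)(x) = ∫ Φ(u,x) f(A(u)(x)) dμ(u) → l` as `x → ∞`. -/
theorem stmt_11 {Ω G V : Type*}
    [TopologicalSpace Ω] [MeasurableSpace Ω] [BorelSpace Ω] (μ : Measure Ω)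
    [Group G] [TopologicalSpace G] [IsTopologicalGroup G] [LocallyCompactSpace G]
    [SigmaCompactSpace G] [MeasurableSpace G] [BorelSpace G]
    [NormedAddCommGroup V] [NormedSpace ℂ V] [CompleteSpace V]
    (A : Ω → G ≃ₜ G)
    (hAhom : ∀ u, ∀ x y : G, A u (x * y) = A u x * A u y)
    (hAcont : ∀ x : G, Continuous fun u => A u x)
    (Φ : Ω → G → ℂ)
    (hint : ∀ x, Integrable (fun u => Φ u x) μ)
    (hia : ∃ C : ℝ, ∀ x, (∫ u, ‖Φ u x‖ ∂μ) ≤ C)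
    (hib : ∀ u, ∃ C : ℝ, ∀ x, ‖Φ u x‖ ≤ C)
    (hii : ∀ ε > (0:ℝ), ∃ K : Set Ω, μ K < ⊤ ∧ ∃ F ∈ Filter.cocompact G, ∀ x ∈ F,
        (∫ u in Kᶜ, ‖Φ u x‖ ∂μ) < ε)
    (hiii : ∀ ε > (0:ℝ), ∃ δ > (0:ℝ), ∀ E : Set Ω, μ E < ENNReal.ofReal δ →
        ∀ x, (∫ u in E, ‖Φ u x‖ ∂μ) < ε)
    (hiv : Tendsto (fun x => ∫ u, Φ u x ∂μ) (Filter.cocompact G) (𝓝 1))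
    (f : G → V) (hfm : StronglyMeasurable f) (hfb : ∃ C : ℝ, ∀ x, ‖f x‖ ≤ C)
    (l : V) (hfl : Tendsto f (Filter.cocompact G) (𝓝 l)) :
    Tendsto (fun x => ∫ u, Φ u x • f (A u x) ∂μ) (Filter.cocompact G) (𝓝 l) := by
  classical
  obtain ⟨M, hM⟩ := hfb
  obtain ⟨C, hC⟩ := hia
  -- The cocompact filter of a σ-compact locally compact space is countably generated.
  haveI hcg : (Filter.cocompact G).IsCountablyGenerated := by
    let K := CompactExhaustion.choice G
    have hb : (Filter.cocompact G).HasBasis (fun _ : ℕ => True) (fun n => (K n)ᶜ) := by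
      refine Filter.hasBasis_cocompact.to_hasBasis ?_ ?_
      · intro s hs
        obtain ⟨n, hn⟩ := K.exists_superset_of_isCompact hs
        exact ⟨n, trivial, Set.compl_subset_compl.2 hn⟩
      · intro n _
        exact ⟨K n, K.isCompact n, subset_rfl⟩
    exact hb.isCountablyGenerated
  -- constants
  set M₁ : ℝ := M + ‖l‖ + 1 with hM₁def
  have hM₁pos : 0 < M₁ := by
    have h0 : (0:ℝ) ≤ M := le_trans (norm_nonneg (f 1)) (hM 1)
    have := norm_nonneg l
    positivity
  have hM₁ : ∀ y : G, ‖f y - l‖ ≤ M₁ := fun y => by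
    calc ‖f y - l‖ ≤ ‖f y‖ + ‖l‖ := norm_sub_le _ _
      _ ≤ M + ‖l‖ + 1 := by have := hM y; linarith
  set C' : ℝ := max C 1 with hC'def
  have hC'pos : 0 < C' := lt_of_lt_of_le one_pos (le_max_right _ _)
  have hC' : ∀ x, (∫ u, ‖Φ u x‖ ∂μ) ≤ C' := fun x => le_trans (hC x) (le_max_left _ _)
  -- reduce to sequences
  rw [Filter.tendsto_iff_seq_tendsto]
  intro xs hxs
  -- measurability of the integrands
  have meas : ∀ n, StronglyMeasurable fun u => f (A u (xs n)) := fun n =>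
    hfm.comp_measurable (hAcont (xs n)).measurable
  set g : ℕ → Ω → V := fun n u => Φ u (xs n) • (f (A u (xs n)) - l) with hgdef
  have hgmeas : ∀ n, AEStronglyMeasurable (g n) μ := fun n =>
    (hint (xs n)).aestronglyMeasurable.smul
      ((meas n).aestronglyMeasurable.sub aestronglyMeasurable_const)
  have hgbound : ∀ n u, ‖g n u‖ ≤ M₁ * ‖Φ u (xs n)‖ := fun n u => by
    rw [hgdef]; simp only [norm_smul]
    calc ‖Φ u (xs n)‖ * ‖f (A u (xs n)) - l‖ ≤ ‖Φ u (xs n)‖ * M₁ :=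
          mul_le_mul_of_nonneg_left (hM₁ _) (norm_nonneg _)
      _ = M₁ * ‖Φ u (xs n)‖ := mul_comm _ _
  have hgint : ∀ n, Integrable (g n) μ := fun n =>
    Integrable.mono' ((hint (xs n)).norm.const_mul M₁) (hgmeas n)
      (ae_of_all _ (hgbound n))
  -- pointwise convergence in u
  have hptw : ∀ u, Tendsto (fun n => f (A u (xs n))) atTop (𝓝 l) := fun u => by
    have hAu : Tendsto (A u) (Filter.cocompact G) (Filter.cocompact G) :=
      ((A u).map_cocompact).le
    exact hfl.comp (hAu.comp hxs)
  -- key: ∫ g n → 0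
  have key : Tendsto (fun n => ∫ u, g n u ∂μ) atTop (𝓝 0) := by
    rw [NormedAddCommGroup.tendsto_nhds_zero]
    intro ε hε
    have hε₁ : (0:ℝ) < ε / (3 * M₁) := by positivity
    obtain ⟨K, hKfin, F, hF, hFsmall⟩ := hii (ε / (3 * M₁)) hε₁
    obtain ⟨δ, hδ, hδ'⟩ := hiii (ε / (3 * M₁)) hε₁
    set K' : Set Ω := toMeasurable μ K with hK'def
    have hK'meas : MeasurableSet K' := measurableSet_toMeasurable μ K
    have hKK' : K ⊆ K' := subset_toMeasurable μ K
    have hK'fin : μ K' < ⊤ := by rwa [hK'def, measure_toMeasurable]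
    haveI : Fact (μ K' < ⊤) := ⟨hK'fin⟩
    set η : ℝ := ε / (3 * C') with hηdef
    have hη : 0 < η := by positivity
    -- convergence in measure on K'
    have hTIM : TendstoInMeasure (μ.restrict K') (fun n u => f (A u (xs n))) atTop
        (fun _ => l) :=
      tendstoInMeasure_of_tendsto_ae (fun n => (meas n).aestronglyMeasurable)
        (ae_of_all _ hptw)
    have hEsmall : ∀ᶠ n in atTop,
        μ.restrict K' {u | η ≤ dist (f (A u (xs n))) l} < ENNReal.ofReal δ :=
      (tendstoInMeasure_iff_dist.1 hTIM η hη).eventually_lt_const (ENNReal.ofReal_pos.2 hδ)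
    have hxF : ∀ᶠ n in atTop, xs n ∈ F := hxs.eventually_mem hF
    filter_upwards [hxF, hEsmall] with n hn1 hn2
    set E : Set Ω := {u | η ≤ dist (f (A u (xs n))) l} with hEdef
    have hEmeas : MeasurableSet E := by
      have h1 : Measurable fun u => dist (f (A u (xs n))) l :=
        ((meas n).dist stronglyMeasurable_const).measurable
      exact measurableSet_le measurable_const h1
    have hφint : Integrable (fun u => ‖Φ u (xs n)‖) μ := (hint (xs n)).norm
    have hφnn : ∀ u, (0:ℝ) ≤ ‖Φ u (xs n)‖ := fun u => norm_nonneg _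
    have hgn : Integrable (fun u => ‖g n u‖) μ := (hgint n).norm
    -- three pieces
    have h1 : (∫ u in K'ᶜ, ‖g n u‖ ∂μ) < ε / 3 := by
      have ha : (∫ u in K'ᶜ, ‖g n u‖ ∂μ) ≤ ∫ u in K'ᶜ, M₁ * ‖Φ u (xs n)‖ ∂μ :=
        setIntegral_mono hgn.integrableOn (hφint.const_mul M₁).integrableOn (hgbound n)
      have hb : (∫ u in K'ᶜ, ‖Φ u (xs n)‖ ∂μ) ≤ ∫ u in Kᶜ, ‖Φ u (xs n)‖ ∂μ :=
        setIntegral_mono_set hφint.integrableOn (ae_of_all _ hφnn)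
          (HasSubset.Subset.eventuallyLE (Set.compl_subset_compl.2 hKK'))
      have hc : (∫ u in Kᶜ, ‖Φ u (xs n)‖ ∂μ) < ε / (3 * M₁) := hFsmall (xs n) hn1
      calc (∫ u in K'ᶜ, ‖g n u‖ ∂μ) ≤ M₁ * ∫ u in K'ᶜ, ‖Φ u (xs n)‖ ∂μ := by
            rwa [integral_const_mul] at ha
        _ < M₁ * (ε / (3 * M₁)) := by
            apply mul_lt_mul_of_pos_left _ hM₁pos
            exact lt_of_le_of_lt hb hc
        _ = ε / 3 := by field_simp
    have hμKE : μ (K' ∩ E) < ENNReal.ofReal δ := by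
      rwa [Set.inter_comm, ← Measure.restrict_apply hEmeas]
    have h2 : (∫ u in K' ∩ E, ‖g n u‖ ∂μ) < ε / 3 := by
      have ha : (∫ u in K' ∩ E, ‖g n u‖ ∂μ) ≤ ∫ u in K' ∩ E, M₁ * ‖Φ u (xs n)‖ ∂μ :=
        setIntegral_mono hgn.integrableOn (hφint.const_mul M₁).integrableOn (hgbound n)
      have hc : (∫ u in K' ∩ E, ‖Φ u (xs n)‖ ∂μ) < ε / (3 * M₁) := hδ' _ hμKE (xs n)
      calc (∫ u in K' ∩ E, ‖g n u‖ ∂μ) ≤ M₁ * ∫ u in K' ∩ E, ‖Φ u (xs n)‖ ∂μ := by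
            rwa [integral_const_mul] at ha
        _ < M₁ * (ε / (3 * M₁)) := mul_lt_mul_of_pos_left hc hM₁pos
        _ = ε / 3 := by field_simp
    have h3 : (∫ u in K' \ E, ‖g n u‖ ∂μ) ≤ ε / 3 := by
      have ha : ∀ u ∈ K' \ E, ‖g n u‖ ≤ η * ‖Φ u (xs n)‖ := by
        intro u hu
        have hdist : dist (f (A u (xs n))) l < η := lt_of_not_ge hu.2
        rw [dist_eq_norm] at hdist
        rw [hgdef]; simp only [norm_smul]
        calc ‖Φ u (xs n)‖ * ‖f (A u (xs n)) - l‖ ≤ ‖Φ u (xs n)‖ * η :=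
              mul_le_mul_of_nonneg_left hdist.le (norm_nonneg _)
          _ = η * ‖Φ u (xs n)‖ := mul_comm _ _
      have hb : (∫ u in K' \ E, ‖g n u‖ ∂μ) ≤ ∫ u in K' \ E, η * ‖Φ u (xs n)‖ ∂μ :=
        setIntegral_mono_on hgn.integrableOn (hφint.const_mul η).integrableOn
          (hK'meas.diff hEmeas) ha
      have hc : (∫ u in K' \ E, ‖Φ u (xs n)‖ ∂μ) ≤ ∫ u, ‖Φ u (xs n)‖ ∂μ :=
        setIntegral_le_integral hφint (ae_of_all _ hφnn)
      calc (∫ u in K' \ E, ‖g n u‖ ∂μ) ≤ η * ∫ u in K' \ E, ‖Φ u (xs n)‖ ∂μ := by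
            rwa [integral_const_mul] at hb
        _ ≤ η * C' := mul_le_mul_of_nonneg_left (le_trans hc (hC' (xs n))) hη.le
        _ = ε / 3 := by rw [hηdef]; field_simp
    -- combine
    have hsplit1 : (∫ u in K', ‖g n u‖ ∂μ) + (∫ u in K'ᶜ, ‖g n u‖ ∂μ)
        = ∫ u, ‖g n u‖ ∂μ := integral_add_compl hK'meas hgn
    have hsplit2 : (∫ u in K' ∩ E, ‖g n u‖ ∂μ) + (∫ u in K' \ E, ‖g n u‖ ∂μ)
        = ∫ u in K', ‖g n u‖ ∂μ := integral_inter_add_diff hEmeas hgn.integrableOn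
    have hnorm : ‖∫ u, g n u ∂μ‖ ≤ ∫ u, ‖g n u‖ ∂μ := norm_integral_le_integral_norm _
    linarith
  -- combine with hiv
  have hrw : ∀ n, (∫ u, Φ u (xs n) • f (A u (xs n)) ∂μ)
      = (∫ u, g n u ∂μ) + (∫ u, Φ u (xs n) ∂μ) • l := by
    intro n
    have : (fun u => Φ u (xs n) • f (A u (xs n)))
        = fun u => g n u + Φ u (xs n) • l := by
      funext u
      rw [hgdef]; simp [smul_sub]
    rw [this, integral_add (hgint n) ((hint (xs n)).smul_const l), integral_smul_const]
  have h2 : Tendsto (fun n => (∫ u, Φ u (xs n) ∂μ) • l) atTop (𝓝 ((1:ℂ) • l)) :=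
    (hiv.comp hxs).smul_const l
  have htot := key.add h2
  simp only [zero_add, one_smul] at htot
  exact Tendsto.congr (fun n => (hrw n).symm) htot
end

section
/- Let G be a locally compact σ-compact group, Ω a compact subgroup of Aut(G) with normalized Haar measure μ, and define the Delsarte generalized shift (T_h f)(x) = ∫_Ω f(h·u(x)) dμ(u) for h ∈ G. If f : G → ℂ is bounded Borel measurable and f(x) → l as x → ∞ (along the cocompact filter), then for every h ∈ G, (T_h f)(x) → l as x → ∞. -/
open MeasureTheory Filter Topology

lemma cocompact_countably_generated_aux {X : Type*} [TopologicalSpace X]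
    [LocallyCompactSpace X] [SigmaCompactSpace X] :
    (Filter.cocompact X).IsCountablyGenerated := by
  let K := CompactExhaustion.choice X
  have hb : (Filter.cocompact X).HasBasis (fun _ : ℕ => True) (fun n => (K n)ᶜ) := by
    apply Filter.hasBasis_cocompact.to_hasBasis
    · intro s hs
      obtain ⟨n, hn⟩ := K.exists_superset_of_isCompact hs
      exact ⟨n, trivial, Set.compl_subset_compl.2 hn⟩
    · intro n _
      exact ⟨K n, K.isCompact n, subset_rfl⟩
  exact hb.isCountablyGenerated

/-- Regularity of the Delsarte generalized shift `(T_h f)(x) = ∫_Ω f(h · u(x)) dμ(u)`, where `Ω`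
is a compact group of topological automorphisms of a σ-compact locally compact group `G`
(acting through `φ`) equipped with its normalized Haar measure `μ`: if `f` is bounded Borel
measurable and `f(x) → l` as `x → ∞` along the cocompact filter, then `(T_h f)(x) → l` as
`x → ∞` for every `h ∈ G`. -/
theorem stmt_12 {Ω G : Type*}
    [Group Ω] [TopologicalSpace Ω] [IsTopologicalGroup Ω] [CompactSpace Ω]
    [MeasurableSpace Ω] [BorelSpace Ω]
    (μ : Measure Ω) [μ.IsHaarMeasure] [IsProbabilityMeasure μ]
    [Group G] [TopologicalSpace G] [IsTopologicalGroup G] [LocallyCompactSpace G]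
    [SigmaCompactSpace G] [MeasurableSpace G] [BorelSpace G]
    (φ : Ω → G ≃ₜ G)
    (hφhom : ∀ u, ∀ x y : G, φ u (x * y) = φ u x * φ u y)
    (hφcont : ∀ x : G, Continuous fun u => φ u x)
    (f : G → ℂ) (hfm : Measurable f) (hfb : ∃ C : ℝ, ∀ x, ‖f x‖ ≤ C)
    (l : ℂ) (hfl : Tendsto f (Filter.cocompact G) (𝓝 l)) :
    ∀ h : G, Tendsto (fun x => ∫ u, f (h * φ u x) ∂μ) (Filter.cocompact G) (𝓝 l) := by
  intro h
  obtain ⟨C, hC⟩ := hfb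
  have : (Filter.cocompact G).IsCountablyGenerated := cocompact_countably_generated_aux
  rw [Filter.tendsto_iff_seq_tendsto]
  intro x hx
  have hint : l = ∫ _ : Ω, l ∂μ := by simp
  rw [hint]
  apply tendsto_integral_of_dominated_convergence (fun _ => C)
  · intro n
    exact (hfm.comp ((continuous_const.mul (hφcont (x n))).measurable)).aestronglyMeasurable
  · exact integrable_const C
  · intro n
    filter_upwards with u using hC _
  · filter_upwards with u
    have h1 : Tendsto (φ u) (Filter.cocompact G) (Filter.cocompact G) :=
      (φ u).isClosedEmbedding.tendsto_cocompact
    have h2 : Tendsto (fun y : G => h * y) (Filter.cocompact G) (Filter.cocompact G) :=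
      Filter.tendsto_cocompact_mul_left (inv_mul_cancel h)
    exact hfl.comp ((h2.comp (h1.comp hx)))
end
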